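/- arXiv:2206.07809 — 2 statements merged into one kernel-verified Lean document; each statement's English description precedes it below -/
import Mathlib

section
/- Let w, W be reals with 0 < w < W < 1/10, and define g_{w,W}(x) := min(1/‖xw‖, 1/W), where ‖·‖ is the distance to the nearest integer. Then for every integer u ≥ 0, the sum of g_{w,W}(k) over integers k with e^u ≤ |k| < e^{u+1} is O((e^u + 1/w)·log(1/W)), with an absolute implied constant. -/
/-- Distance from a real number to the nearest integer. -/
noncomputable def nearestIntDist (x : ℝ) : ℝ := |x - round x|

/-- `g_{w,W}(x) = min(‖xw‖⁻¹, W⁻¹)`, with the convention that it equals `W⁻¹`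
when `xw` is an integer. -/
noncomputable def gwW (w W x : ℝ) : ℝ :=
  if nearestIntDist (x * w) = 0 then W⁻¹ else min (nearestIntDist (x * w))⁻¹ W⁻¹

/-!
Split the values of `g` dyadically: `g(k) ≤ 2 + ∑_{j < J} 2^{j+2} · 1[‖kw‖ < 2^{-(j+1)}]`
with `2^J ≤ 1/W < 2^{J+1}`. For `|k| ≤ N`, `round(kw)` takes at most `2Nw + 2` values `m`,
and the `k` with `|kw - m| < t` form a run of at most `2t/w + 1` integers; hence
`#{|k| ≤ N : ‖kw‖ < t} ≤ (2t/w + 1)(2Nw + 2)`.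
The `j`-th layer thus contributes `≪ (1/w + 2^j)(Nw + 1)`, and summing over the
`J ≪ log(1/W)` layers gives `≪ N log(1/W) + log(1/W)/w + Nw/W + 1/W`, with `w < W`.
-/

open Finset Real

lemma nearestIntDist_nonneg (x : ℝ) : 0 ≤ nearestIntDist x := abs_nonneg _

lemma gwW_nonneg {W : ℝ} (hW : 0 ≤ W) (w x : ℝ) : 0 ≤ gwW w W x := by
  unfold gwW
  split
  · positivity
  · exact le_min (inv_nonneg.2 (nearestIntDist_nonneg _)) (inv_nonneg.2 hW)

lemma gwW_le_inv (w W x : ℝ) : gwW w W x ≤ W⁻¹ := by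
  unfold gwW
  split
  · exact le_rfl
  · exact min_le_right _ _

lemma gwW_mul_nearestIntDist_le_one (w W x : ℝ) : gwW w W x * nearestIntDist (x * w) ≤ 1 := by
  unfold gwW
  split
  case isTrue h => simp [h]
  case isFalse h =>
    calc min (nearestIntDist (x * w))⁻¹ W⁻¹ * nearestIntDist (x * w)
        ≤ (nearestIntDist (x * w))⁻¹ * nearestIntDist (x * w) :=
          mul_le_mul_of_nonneg_right (min_le_left _ _) (nearestIntDist_nonneg _)
      _ = 1 := inv_mul_cancel₀ h

lemma le_two_add_sum_dyadic {y d : ℝ} (J : ℕ) (hy : y ≤ 2 ^ (J + 1)) (hyd : y * d ≤ 1) :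
    y ≤ 2 + ∑ j ∈ range J, if d < (2 ^ (j + 1))⁻¹ then (2 : ℝ) ^ (j + 2) else 0 := by
  induction J with
  | zero => simpa using hy
  | succ J ih =>
    have hlayers :
        0 ≤ ∑ j ∈ range J, if d < (2 ^ (j + 1))⁻¹ then (2 : ℝ) ^ (j + 2) else 0 :=
      sum_nonneg fun j _ => by split <;> positivity
    rw [sum_range_succ]
    by_cases hyJ : y ≤ 2 ^ (J + 1)
    · have := ih hyJ
      split <;> linarith [pow_pos (two_pos (α := ℝ)) (J + 2)]
    · push Not at hyJ
      have hy0 : 0 < y := lt_trans (by positivity) hyJ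
      have hd : d < (2 ^ (J + 1))⁻¹ :=
        calc d ≤ y⁻¹ := by rw [← one_div, le_div_iff₀ hy0]; linarith
          _ < (2 ^ (J + 1))⁻¹ := inv_strictAnti₀ (by positivity) hyJ
      rw [if_pos hd]
      linarith

lemma card_Icc_ceil_floor_le {a b : ℝ} (hab : a ≤ b) :
    (#(Icc ⌈a⌉ ⌊b⌋) : ℝ) ≤ b - a + 1 := by
  have hnonneg : 0 ≤ ⌊b⌋ + 1 - ⌈a⌉ := by
    have : ⌈a⌉ < ⌊b⌋ + 2 := by
      rw [Int.ceil_lt_iff]; push_cast; linarith [Int.lt_floor_add_one b]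
    omega
  rw [Int.card_Icc, ← Int.cast_natCast, Int.toNat_of_nonneg hnonneg]
  push_cast
  linarith [Int.floor_le b, Int.le_ceil a]

lemma card_filter_nearestIntDist_lt_le {w t : ℝ} (hw : 0 < w) (ht : 0 ≤ t) {N : ℤ}
    (hN : 0 ≤ N) :
    (#((Icc (-N) N).filter fun k : ℤ => nearestIntDist (k * w) < t) : ℝ)
      ≤ (2 * t / w + 1) * (2 * N * w + 2) := by
  set R : Finset ℤ := Icc ⌈-(N * w) - 1 / 2⌉ ⌊N * w + 1 / 2⌋
  have hsub : (Icc (-N) N).filter (fun k : ℤ => nearestIntDist (k * w) < t) ⊆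
      R.biUnion fun m : ℤ => Icc ⌈(m - t) / w⌉ ⌊(m + t) / w⌋ := by
    intro k hk
    simp only [mem_filter, Finset.mem_Icc] at hk
    obtain ⟨⟨hkN, hNk⟩, hkt⟩ := hk
    have hkw : |(k : ℝ) * w| ≤ N * w := by
      rw [abs_mul, abs_of_pos hw]
      gcongr
      exact_mod_cast abs_le.2 ⟨hkN, hNk⟩
    have hround := abs_sub_round ((k : ℝ) * w)
    rw [abs_le] at hkw hround
    rw [nearestIntDist, abs_lt] at hkt
    simp only [mem_biUnion, mem_Icc, R, Int.ceil_le, Int.le_floor, div_le_iff₀ hw,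
      le_div_iff₀ hw]
    exact ⟨round ((k : ℝ) * w), ⟨by linarith, by linarith⟩, by linarith, by linarith⟩
  have hNw : 0 ≤ (N : ℝ) * w := by positivity
  calc (#((Icc (-N) N).filter fun k : ℤ => nearestIntDist (k * w) < t) : ℝ)
      ≤ #(R.biUnion fun m : ℤ => Icc ⌈(m - t) / w⌉ ⌊(m + t) / w⌋) := by
        exact_mod_cast card_le_card hsub
    _ ≤ ∑ m ∈ R, (#(Icc ⌈(m - t) / w⌉ ⌊(m + t) / w⌋) : ℝ) := by
        exact_mod_cast card_biUnion_le
    _ ≤ ∑ _m ∈ R, (2 * t / w + 1) := by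
        gcongr with m
        refine (card_Icc_ceil_floor_le (by gcongr; linarith)).trans_eq ?_
        ring
    _ = #R * (2 * t / w + 1) := by rw [sum_const, nsmul_eq_mul]
    _ ≤ (2 * N * w + 2) * (2 * t / w + 1) := by
        gcongr
        exact (card_Icc_ceil_floor_le (by linarith)).trans_eq (by ring)
    _ = (2 * t / w + 1) * (2 * N * w + 2) := mul_comm _ _

lemma sum_gwW_Icc_le {w W : ℝ} (hw : 0 < w) {J : ℕ} (hJ : W⁻¹ ≤ 2 ^ (J + 1)) {N : ℤ}
    (hN : 0 ≤ N) :
    ∑ k ∈ Icc (-N) N, gwW w W k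
      ≤ 2 * (2 * N + 1) + (4 * J / w + 2 ^ (J + 2)) * (2 * N * w + 2) := by
  have hcard : (#(Icc (-N) N) : ℝ) = 2 * N + 1 := by
    rw [Int.card_Icc, ← Int.cast_natCast, Int.toNat_of_nonneg (by omega)]
    push_cast
    ring
  have hlayer (j : ℕ) :
      ∑ k ∈ Icc (-N) N,
          (if nearestIntDist (k * w) < (2 ^ (j + 1))⁻¹ then (2 : ℝ) ^ (j + 2) else 0)
        ≤ (4 / w + 2 ^ (j + 2)) * (2 * N * w + 2) := by
    rw [← sum_filter, sum_const, nsmul_eq_mul]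
    calc _ ≤ (2 * (2 ^ (j + 1))⁻¹ / w + 1) * (2 * N * w + 2) * (2 : ℝ) ^ (j + 2) := by
          gcongr
          exact card_filter_nearestIntDist_lt_le hw (by positivity) hN
      _ = (4 / w + 2 ^ (j + 2)) * (2 * N * w + 2) := by
          field_simp
          ring
  have hgeom : ∑ j ∈ range J, (2 : ℝ) ^ (j + 2) ≤ 2 ^ (J + 2) := by
    rw [sum_congr rfl fun j _ => pow_add 2 j 2, ← sum_mul, geom_sum_eq (by norm_num),
      pow_add]
    norm_num
  calc ∑ k ∈ Icc (-N) N, gwW w W k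
      ≤ ∑ k ∈ Icc (-N) N, (2 + ∑ j ∈ range J,
          if nearestIntDist (k * w) < (2 ^ (j + 1))⁻¹ then (2 : ℝ) ^ (j + 2) else 0) :=
        sum_le_sum fun k _ => le_two_add_sum_dyadic J ((gwW_le_inv w W k).trans hJ)
          (gwW_mul_nearestIntDist_le_one w W k)
    _ = 2 * (2 * N + 1) + ∑ j ∈ range J, ∑ k ∈ Icc (-N) N,
          (if nearestIntDist (k * w) < (2 ^ (j + 1))⁻¹ then (2 : ℝ) ^ (j + 2) else 0) := by
        rw [sum_add_distrib, sum_const, nsmul_eq_mul, hcard, sum_comm, mul_comm]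
    _ ≤ 2 * (2 * N + 1) + ∑ j ∈ range J, (4 / w + 2 ^ (j + 2)) * (2 * N * w + 2) := by
        gcongr with j
        exact hlayer j
    _ ≤ 2 * (2 * N + 1) + (4 * J / w + 2 ^ (J + 2)) * (2 * N * w + 2) := by
        rw [← sum_mul, sum_add_distrib, sum_const, card_range, nsmul_eq_mul, mul_div_assoc',
          mul_comm (J : ℝ)]
        gcongr

lemma sum_gwW_Icc_le_log {w W : ℝ} (hw : 0 < w) (hwW : w < W) (hW : W < 1 / 10) {N : ℤ}
    (hN : 1 ≤ N) : ∑ k ∈ Icc (-N) N, gwW w W k ≤ 25 * ((N + 1 / w) * log (1 / W)) := by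
  have hW0 : 0 < W := hw.trans hwW
  obtain ⟨J, hJ, hJ'⟩ := exists_nat_pow_near ((one_le_inv₀ hW0).2 (by linarith)) one_lt_two
  rw [one_div W]
  set L := log W⁻¹
  have hL : 2 ≤ L := by
    rw [le_log_iff_exp_le (by positivity), show (2 : ℝ) = 1 + 1 by norm_num, exp_add]
    have : 10 < W⁻¹ := by rw [lt_inv_comm₀ (by norm_num) hW0]; linarith
    nlinarith [exp_one_lt_d9, exp_pos 1]
  have hJL : (J : ℝ) ≤ 2 * L := by
    have hlog : J * log 2 ≤ L := by
      rw [← log_pow]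
      exact log_le_log (by positivity) hJ
    nlinarith [log_two_gt_d9]
  have hN1 : (1 : ℝ) ≤ N := by exact_mod_cast hN
  have hP : (2 : ℝ) ^ (J + 2) ≤ 4 * W⁻¹ := by rw [pow_add]; linarith
  have hPw : (2 : ℝ) ^ (J + 2) * w ≤ 4 := by
    calc (2 : ℝ) ^ (J + 2) * w ≤ 4 * W⁻¹ * w := by gcongr
      _ ≤ 4 := by
          have : W⁻¹ * w ≤ 1 := by rw [inv_mul_le_iff₀ hW0]; linarith
          linarith [mul_assoc 4 W⁻¹ w]
  have hPL : (2 : ℝ) ^ (J + 2) ≤ 2 * (L / w) :=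
    calc (2 : ℝ) ^ (J + 2) ≤ 4 * W⁻¹ := hP
      _ ≤ 4 * w⁻¹ := by gcongr
      _ ≤ 2 * (L / w) := by rw [div_eq_mul_inv]; nlinarith [inv_pos.2 hw]
  have hJw : J / w ≤ 2 * (L / w) := by rw [mul_div_assoc']; gcongr
  have hJN : J * N ≤ 2 * L * N := by gcongr
  have hNL : 2 * N ≤ N * L := by nlinarith
  have hNPw : N * ((2 : ℝ) ^ (J + 2) * w) ≤ N * 4 := by gcongr
  calc ∑ k ∈ Icc (-N) N, gwW w W k
      ≤ 2 * (2 * N + 1) + (4 * J / w + 2 ^ (J + 2)) * (2 * N * w + 2) :=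
        sum_gwW_Icc_le hw hJ'.le (by omega)
    _ = 4 * N + 2 + 8 * (J * N) + 8 * (J / w) + 2 * (N * (2 ^ (J + 2) * w))
          + 2 * 2 ^ (J + 2) := by
        field_simp
        ring
    _ ≤ 25 * (N * L + L / w) := by linarith [show 0 ≤ L / w by positivity]
    _ = 25 * ((N + 1 / w) * L) := by ring

/-- For `0 < w < W < 1/10` and any integer `u ≥ 0`,
`∑_{e^u ≤ |k| < e^{u+1}} g_{w,W}(k) ≪ (e^u + 1/w) log(1/W)` with an absolute constant. -/
theorem sum_gwW_le : ∃ C : ℝ, 0 < C ∧ ∀ w W : ℝ, 0 < w → w < W → W < 1/10 → ∀ u : ℕ,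
    ∑ k ∈ Finset.Icc (-⌈Real.exp ((u:ℝ)+1)⌉) ⌈Real.exp ((u:ℝ)+1)⌉,
      (if Real.exp (u:ℝ) ≤ |(k:ℝ)| ∧ |(k:ℝ)| < Real.exp ((u:ℝ)+1) then gwW w W (k:ℝ) else 0)
      ≤ C * ((Real.exp (u:ℝ) + 1/w) * Real.log (1/W)) := by
  refine ⟨100, by norm_num, fun w W hw hwW hW u => ?_⟩
  set N := ⌈exp ((u : ℝ) + 1)⌉
  have hN : (N : ℝ) ≤ 4 * exp u := by
    have hexp : exp ((u : ℝ) + 1) ≤ 3 * exp u := by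
      rw [exp_add]
      nlinarith [exp_one_lt_d9, exp_pos (u : ℝ)]
    linarith [Int.ceil_lt_add_one (exp ((u : ℝ) + 1)), one_le_exp (Nat.cast_nonneg (α := ℝ) u)]
  have hL : 0 ≤ log (1 / W) := log_nonneg (by rw [le_div_iff₀ (hw.trans hwW)]; linarith)
  calc _ ≤ ∑ k ∈ Icc (-N) N, gwW w W k :=
        sum_le_sum fun k _ => by
          split
          · exact le_rfl
          · exact gwW_nonneg (hw.trans hwW).le w k
    _ ≤ 25 * ((N + 1 / w) * log (1 / W)) :=
        sum_gwW_Icc_le_log hw hwW hW (Int.one_le_ceil_iff.2 (exp_pos _))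
    _ ≤ 100 * ((exp u + 1 / w) * log (1 / W)) := by nlinarith [show 0 ≤ 1 / w by positivity]
end

section
/- Let A > 1 and ω(x) = (log x)^A, with ω̃ = (ω′)⁻¹ defined for arguments corresponding to x > e^{A−1}. For each integer j ≥ 1 there exists a rational function f_j (depending only on A and j) such that ω̃^{(j)}(ω′(x)) = x^{j+1} f_j(log x) for all x > e^{A−1}. -/
/-!
On `(e^{A-1}, ∞)` the function `ω′(x) = A (log x)^{A-1} / x` has the non-vanishing derivative
`ω″(x) = A (log x)^A (A - 1 - log x) / (x log x)²`, so by the inverse function theorem any left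
inverse `ω̃` of `ω′` there agrees near `ω′(x)` with the local inverse, and `ω̃′(ω′(x)) = 1 / ω″(x)`.
Writing `u = log x`, `v = u^A`, the operator `x log x · d/dx` acts on polynomials in `(u, v)` as the
derivation `u ∂_u + A v ∂_v`. Hence if `ω̃^{(n)}(ω′(x)) = x^{n+1} p(u, v) / q(u, v)`, differentiating
in `x` and dividing by `ω″(x)` gives the same shape for `n + 1`, starting from `ω̃(ω′(x)) = x`.
-/

open Real MvPolynomial Filter Set Topology

theorem HasStrictDerivAt.eventually_mem_and_right_inverse_of_leftInvOn {𝕜 : Type*}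
    [NontriviallyNormedField 𝕜] [CompleteSpace 𝕜] {f g : 𝕜 → 𝕜} {f' a : 𝕜} {s : Set 𝕜}
    (hf : HasStrictDerivAt f f' a) (hf' : f' ≠ 0) (hs : s ∈ 𝓝 a) (hg : LeftInvOn g f s) :
    ∀ᶠ y in 𝓝 (f a), g y ∈ s ∧ f (g y) = y := by
  rw [← hf.map_nhds_eq hf', eventually_map]
  filter_upwards [hs] with x hx
  rw [hg hx]
  exact ⟨hx, rfl⟩

namespace LogPowInverse

variable (A : ℝ)

noncomputable def omegaD (x : ℝ) : ℝ := A * log x ^ (A - 1) / x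

noncomputable def logVec (x : ℝ) : Fin 2 → ℝ := ![log x, log x ^ A]

-- `u d/du` on polynomials in `u` and `v = u^A`, since `u dv/du = A v`.
noncomputable def eulerDeriv : Derivation ℝ (MvPolynomial (Fin 2) ℝ) (MvPolynomial (Fin 2) ℝ) :=
  (X 0 : MvPolynomial (Fin 2) ℝ) • pderiv 0 + (C A * X 1 : MvPolynomial (Fin 2) ℝ) • pderiv 1

noncomputable def omega2Num : MvPolynomial (Fin 2) ℝ := C A * X 1 * (C (A - 1) - X 0)

-- From `d/dx (x^{n+1} p/q) = x^n ((n+1) u p q + D p · q - p · D q) / (u q²)` with `D = eulerDeriv A`,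
-- divided by `ω″(x)`.
noncomputable def invDerivFrac : ℕ → MvPolynomial (Fin 2) ℝ × MvPolynomial (Fin 2) ℝ
  | 0 => (1, 1)
  | n + 1 =>
    let p := (invDerivFrac n).1
    let q := (invDerivFrac n).2
    (X 0 * (C ((n + 1 : ℕ) : ℝ) * X 0 * p * q + eulerDeriv A p * q - p * eulerDeriv A q),
      omega2Num A * q ^ 2)

variable {A}

lemma eulerDeriv_X_zero : eulerDeriv A (X 0) = X 0 := by
  simp [eulerDeriv, pderiv_X]

lemma eulerDeriv_X_one : eulerDeriv A (X 1) = C A * X 1 := by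
  simp [eulerDeriv, pderiv_X]

lemma hasDerivAt_logVec {x : ℝ} (hx : log x ≠ 0) (i : Fin 2) :
    HasDerivAt (fun t => logVec A t i) (eval (logVec A x) (eulerDeriv A (X i)) / (x * log x)) x := by
  have hlog : HasDerivAt log x⁻¹ x := hasDerivAt_log (by rintro rfl; simp at hx)
  match i with
  | 0 =>
    refine hlog.congr_deriv ?_
    simp only [eulerDeriv_X_zero, logVec, eval_X, Matrix.cons_val_zero]
    field_simp
  | 1 =>
    refine ((hasDerivAt_rpow_const (p := A) (Or.inl hx)).comp x hlog).congr_deriv ?_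
    simp only [eulerDeriv_X_one, rpow_sub_one hx, logVec, map_mul, eval_C, eval_X,
      Matrix.cons_val_one, Matrix.cons_val_fin_one]
    field_simp

lemma hasDerivAt_eval_logVec {x : ℝ} (hx : log x ≠ 0) (r : MvPolynomial (Fin 2) ℝ) :
    HasDerivAt (fun t => eval (logVec A t) r)
      (eval (logVec A x) (eulerDeriv A r) / (x * log x)) x := by
  induction r using MvPolynomial.induction_on with
  | C a => simpa using hasDerivAt_const x a
  | add p q hp hq => simpa only [map_add, add_div] using hp.fun_add hq
  | mul_X p i hp =>
    simp only [map_mul, eval_X, Derivation.leibniz, smul_eq_mul, map_add]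
    refine (hp.fun_mul (hasDerivAt_logVec hx i)).congr_deriv ?_
    ring

lemma hasStrictDerivAt_omegaD {x : ℝ} (hx : log x ≠ 0) :
    HasStrictDerivAt (omegaD A) (eval (logVec A x) (omega2Num A) / (x * log x) ^ 2) x := by
  have hx0 : x ≠ 0 := by rintro rfl; simp at hx
  have hpow := (hasStrictDerivAt_rpow_const_of_ne hx (A - 1)).comp x (hasStrictDerivAt_log hx0)
  refine ((hpow.const_mul A).div (hasStrictDerivAt_id x) hx0).congr_deriv ?_
  simp only [rpow_sub_one hx, id_eq, Function.comp_apply, mul_one, logVec, omega2Num, map_mul,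
    map_sub, eval_C, eval_X, Matrix.cons_val_zero, Matrix.cons_val_one, Matrix.cons_val_fin_one]
  field_simp

lemma eval_omega2Num_ne_zero (hA : 1 < A) {x : ℝ} (hx : exp (A - 1) < x) :
    eval (logVec A x) (omega2Num A) ≠ 0 := by
  have hL : A - 1 < log x := (lt_log_iff_exp_lt ((exp_pos _).trans hx)).2 hx
  have hL0 : 0 < log x := by linarith
  simp only [omega2Num, logVec, map_mul, map_sub, eval_C, eval_X, Matrix.cons_val_zero,
    Matrix.cons_val_one]
  exact mul_ne_zero (mul_ne_zero (by linarith) (rpow_pos_of_pos hL0 A).ne') (by linarith)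

lemma eval_invDerivFrac_snd_ne_zero (hA : 1 < A) {x : ℝ} (hx : exp (A - 1) < x) (n : ℕ) :
    eval (logVec A x) (invDerivFrac A n).2 ≠ 0 := by
  induction n with
  | zero => simp [invDerivFrac]
  | succ n ih =>
    simp only [invDerivFrac, map_mul, map_pow]
    exact mul_ne_zero (eval_omega2Num_ne_zero hA hx) (pow_ne_zero 2 ih)

lemma hasDerivAt_pow_mul_eval_div {x : ℝ} (hx : log x ≠ 0) (n : ℕ) {p q : MvPolynomial (Fin 2) ℝ}
    (hq : eval (logVec A x) q ≠ 0) :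
    HasDerivAt (fun t => t ^ (n + 1) * (eval (logVec A t) p / eval (logVec A t) q))
      (x ^ (n + 1) * eval (logVec A x)
          (C ((n + 1 : ℕ) : ℝ) * X 0 * p * q + eulerDeriv A p * q - p * eulerDeriv A q) /
        (eval (logVec A x) q ^ 2 * (x * log x))) x := by
  have hx0 : x ≠ 0 := by rintro rfl; simp at hx
  refine ((hasDerivAt_pow (n + 1) x).fun_mul
    ((hasDerivAt_eval_logVec hx p).fun_div (hasDerivAt_eval_logVec hx q) hq)).congr_deriv ?_
  simp only [Nat.cast_add, Nat.cast_one, add_tsub_cancel_right, map_sub, map_add, map_mul, eval_C,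
    eval_X, logVec, Matrix.cons_val_zero]
  field_simp
  ring

lemma iteratedDeriv_apply_omegaD (hA : 1 < A) {g : ℝ → ℝ}
    (hg : LeftInvOn g (omegaD A) (Ioi (exp (A - 1)))) (n : ℕ) {x : ℝ} (hx : exp (A - 1) < x) :
    iteratedDeriv n g (omegaD A x) = x ^ (n + 1) *
      (eval (logVec A x) (invDerivFrac A n).1 / eval (logVec A x) (invDerivFrac A n).2) := by
  induction n generalizing x with
  | zero => simp [invDerivFrac, hg hx]
  | succ n ih =>
    have hx0 : x ≠ 0 := ((exp_pos _).trans hx).ne'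
    have hL : 0 < log x := by
      have := (lt_log_iff_exp_lt ((exp_pos _).trans hx)).2 hx
      linarith
    have hω2 := eval_omega2Num_ne_zero hA hx
    have hq := eval_invDerivFrac_snd_ne_zero hA hx n
    have hω := hasStrictDerivAt_omegaD (A := A) hL.ne'
    have hω' : eval (logVec A x) (omega2Num A) / (x * log x) ^ 2 ≠ 0 :=
      div_ne_zero hω2 (pow_ne_zero 2 (mul_ne_zero hx0 hL.ne'))
    have hev : iteratedDeriv n g =ᶠ[𝓝 (omegaD A x)] (fun t => t ^ (n + 1) *
        (eval (logVec A t) (invDerivFrac A n).1 / eval (logVec A t) (invDerivFrac A n).2)) ∘ g := by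
      filter_upwards [hω.eventually_mem_and_right_inverse_of_leftInvOn hω' (Ioi_mem_nhds hx) hg]
        with y ⟨hy, hgy⟩
      simpa [hgy] using ih hy
    have hgd := (hω.to_local_left_inverse hω' (eventually_of_mem (Ioi_mem_nhds hx) hg)).hasDerivAt
    have hF := hasDerivAt_pow_mul_eval_div hL.ne' n (p := (invDerivFrac A n).1) hq
    rw [iteratedDeriv_succ, hev.deriv_eq, (hF.comp_of_eq (omegaD A x) hgd (hg hx).symm).deriv]
    simp only [invDerivFrac, map_mul, map_pow, eval_X]
    field_simp
    simp only [logVec, Matrix.cons_val_zero]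
    ring

end LogPowInverse

open LogPowInverse

theorem iteratedDeriv_inverse_omegaD_eq_general (A : ℝ) (hA : 1 < A) (g : ℝ → ℝ)
    (hinv : ∀ x : ℝ, Real.exp (A - 1) < x → g (A * Real.log x ^ (A - 1) / x) = x)
    (j : ℕ) :
    ∃ p q : MvPolynomial (Fin 2) ℝ,
      ∀ x : ℝ, Real.exp (A - 1) < x →
        MvPolynomial.eval ![Real.log x, Real.log x ^ A] q ≠ 0 ∧
        iteratedDeriv j g (A * Real.log x ^ (A - 1) / x) =
          x ^ (j + 1) *
            (MvPolynomial.eval ![Real.log x, Real.log x ^ A] p /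
             MvPolynomial.eval ![Real.log x, Real.log x ^ A] q) :=
  ⟨(invDerivFrac A j).1, (invDerivFrac A j).2, fun _ hx =>
    ⟨eval_invDerivFrac_snd_ne_zero hA hx j, iteratedDeriv_apply_omegaD hA hinv j hx⟩⟩

/-- For `ω(x) = (log x)^A` with `A > 1` and `ω̃ = (ω′)⁻¹` (here `g`, a left inverse of
`ω′` on `(e^{A-1}, ∞)`), for every `j ≥ 1` there is a rational function `f_j` (rational
in `t` and `t^A`, depending only on `A` and `j`) with
`ω̃^{(j)}(ω′(x)) = x^{j+1} f_j(log x)` for all `x > e^{A-1}`. -/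
theorem iteratedDeriv_inverse_omegaD_eq (A : ℝ) (hA : 1 < A) (g : ℝ → ℝ)
    (hinv : ∀ x : ℝ, Real.exp (A - 1) < x → g (A * Real.log x ^ (A - 1) / x) = x)
    (j : ℕ) (hj : 1 ≤ j) :
    ∃ p q : MvPolynomial (Fin 2) ℝ,
      ∀ x : ℝ, Real.exp (A - 1) < x →
        MvPolynomial.eval ![Real.log x, Real.log x ^ A] q ≠ 0 ∧
        iteratedDeriv j g (A * Real.log x ^ (A - 1) / x) =
          x ^ (j + 1) *
            (MvPolynomial.eval ![Real.log x, Real.log x ^ A] p /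
             MvPolynomial.eval ![Real.log x, Real.log x ^ A] q) :=
  iteratedDeriv_inverse_omegaD_eq_general A hA g hinv j
end
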